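/- The topological closure of G ≤ Aut(T) fails Property IP_k for every k ∈ ℕ if and only if the k-closures G^(k), k ∈ ℕ, are pairwise eventually distinct, i.e., the descending chain G^(1) ≥ G^(2) ≥ ... never stabilises. -/

import Mathlib

/-!
Write `G^(k)` for the `k`-closures. As `T` is locally finite, `closure G = ⋂ k, G^(k)`.
For `k ≥ 1` the group `G^(k)` has Property `IP_k`: an element `f` fixing `B(v,k) ∩ B(w,k)` is the
product of its restrictions to the two semi-trees of the edge `(v,w)` (each extended by the
identity), and on every `k`-ball each restriction agrees with `f` or with the identity, hence
with an element of `G`. So if the chain stabilises at `k`, then `closure G = G^(k+1)` has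
`IP_{k+1}`.

Conversely, suppose `closure G` has `IP_k`. For `k = 0` this forces `closure G` to preserve
every semi-tree, so it is trivial. For `k ≥ 1`, take `x ∈ G^(k)` and an element of
`closure G` agreeing with `x` on a ball `B(v₀, k + m)`. Across each edge `(a,b)` leaving
`B(v₀, m)`, `IP_k` splices it with an element of `G` agreeing with `x` on `B(b,k)`; this enlarges
the ball of agreement by one. Hence `G^(k) ⊆ closure G ⊆ G^(r)` for all `r`, and the chain is
constant from `k` on.
-/

open SimpleGraph Set

variable {V : Type*}

/-- The ball of radius `k` about the vertex `v`, with respect to the path metric. -/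
def ball (T : SimpleGraph V) (v : V) (k : ℕ) : Set V := {u | T.dist v u ≤ k}

/-- `g` fixes the vertex set `S` pointwise. -/
def Fixes {T : SimpleGraph V} (g : T ≃g T) (S : Set V) : Prop := ∀ u ∈ S, g u = u

/-- The `k`-closure of a set `S` of automorphisms of `T`: all automorphisms that agree
with some element of `S` on every ball of radius `k`. -/
def kClosure (T : SimpleGraph V) (S : Set (T ≃g T)) (k : ℕ) : Set (T ≃g T) :=
  {x | ∀ v : V, ∃ g ∈ S, ∀ u ∈ _root_.ball T v k, g u = x u}

/-- A (non-empty) subtree of a tree, viewed as a geodesically convex set of vertices. -/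
def IsSubtree (T : SimpleGraph V) (Y : Set V) : Prop :=
  Y.Nonempty ∧ ∀ u ∈ Y, ∀ v ∈ Y, ∀ w : V, T.dist u w + T.dist w v = T.dist u v → w ∈ Y

/-- `G` stabilises the vertex set `Y` (setwise). -/
def Stabilizes {T : SimpleGraph V} (S : Set (T ≃g T)) (Y : Set V) : Prop :=
  ∀ g ∈ S, (fun u => g u) '' Y = Y

/-- The semi-tree `T_{(v,w)}`: the component of `w` after removing the edge pair
`{(v,w),(w,v)}`, i.e. the vertices strictly closer to `w` than to `v`. -/
def semiTree (T : SimpleGraph V) (v w : V) : Set V := {u | T.dist w u < T.dist v u}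

/-- The permutation topology on `Aut(T)`: pointwise convergence on vertices. -/
instance autTopology (T : SimpleGraph V) : TopologicalSpace (T ≃g T) :=
  TopologicalSpace.induced (fun g => (g : V → V))
    (@Pi.topologicalSpace V (fun _ => V) (fun _ => ⊥))

/-- Property `IP_k` for a set `S` of automorphisms of `T`: for every edge `(v,w)`, every
element of the pointwise fixator of `B(v,k) ∩ B(w,k)` in `S` decomposes as a product of
two such elements, the first fixing the semi-tree `T_{(v,w)}` pointwise and the second
fixing `T_{(w,v)}` pointwise. -/
def PropertyIPk (T : SimpleGraph V) (S : Set (T ≃g T)) (k : ℕ) : Prop :=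
  ∀ v w : V, T.Adj v w → ∀ f ∈ S, Fixes f (_root_.ball T v k ∩ _root_.ball T w k) →
    ∃ f₁ ∈ S, ∃ f₂ ∈ S,
      Fixes f₁ (_root_.ball T v k ∩ _root_.ball T w k) ∧ Fixes f₂ (_root_.ball T v k ∩ _root_.ball T w k) ∧
      Fixes f₁ (semiTree T v w) ∧ Fixes f₂ (semiTree T w v) ∧ f = f₁ * f₂

namespace SimpleGraph

variable {G : SimpleGraph V}

theorem Reachable.dist_map_le {W : Type*} {G' : SimpleGraph W} {u v : V} (f : G →g G')
    (h : G.Reachable u v) : G'.dist (f u) (f v) ≤ G.dist u v := by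
  obtain ⟨p, hp⟩ := h.exists_walk_length_eq_dist
  simpa [hp] using dist_le (p.map f)

theorem Iso.dist_map {W : Type*} {G' : SimpleGraph W} (f : G ≃g G') (u v : V) :
    G'.dist (f u) (f v) = G.dist u v := by
  by_cases h : G.Reachable u v
  · refine le_antisymm (h.dist_map_le f.toHom) ?_
    simpa using (Iso.reachable_iff (φ := f) |>.mpr h).dist_map_le f.symm.toHom
  · rw [dist_eq_zero_of_not_reachable h,
      dist_eq_zero_of_not_reachable (mt Iso.reachable_iff.mp h)]

theorem dist_add_dist_of_mem_support {u v c : V} {p : G.Walk u v}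
    (hp : p.length = G.dist u v) (hc : c ∈ p.support) :
    G.dist u c + G.dist c v = G.dist u v := by
  classical
  have hsplit := congrArg Walk.length (p.take_spec hc)
  rw [Walk.length_append] at hsplit
  have := dist_le (p.takeUntil c hc)
  have := dist_le (p.dropUntil c hc)
  have := (p.takeUntil c hc).reachable.dist_triangle_left v
  omega

theorem exists_adj_dist_eq {u v : V} {n : ℕ} (h : G.dist u v = n + 1) :
    ∃ w, G.Adj w v ∧ G.dist u w = n := by
  rw [dist_comm] at h
  obtain ⟨p, hp⟩ := exists_walk_of_dist_ne_zero (G := G) (u := v) (v := u) (by omega)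
  cases p with
  | nil => simp at h
  | @cons _ w _ hvw q =>
    refine ⟨w, hvw.symm, ?_⟩
    rw [Walk.length_cons] at hp
    have := dist_le q
    have := hvw.reachable.dist_triangle_left u
    have := dist_eq_one_iff_adj.mpr hvw
    rw [dist_comm]
    omega

theorem Connected.exists_dist_eq_of_le (hG : G.Connected) {u x : V} {m : ℕ}
    (hm : m ≤ G.dist u x) : ∃ z, G.dist u z = m ∧ G.dist u z + G.dist z x = G.dist u x := by
  obtain ⟨n, hn⟩ := Nat.exists_eq_add_of_le hm
  induction n generalizing x with
  | zero => exact ⟨x, hn, by simp⟩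
  | succ n ih =>
    obtain ⟨a, hax, hua⟩ := exists_adj_dist_eq (n := m + n) hn
    obtain ⟨z, huz, hzua⟩ := ih (x := a) (by omega) hua
    have := hG.dist_triangle (u := z) (v := a) (w := x)
    have := hG.dist_triangle (u := u) (v := z) (w := x)
    have := dist_eq_one_iff_adj.mpr hax
    exact ⟨z, huz, by omega⟩

theorem Iso.exists_eqOn_and_eqOn_compl (f : G ≃g G) (S : Set V)
    (hS : ∀ u, f u ∈ S ↔ u ∈ S) (hfix : ∀ a ∈ S, ∀ b ∉ S, G.Adj a b → f a = a) :
    ∃ g : G ≃g G, (∀ u ∈ S, g u = f u) ∧ ∀ u ∉ S, g u = u := by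
  classical
  let σ : Equiv.Perm V := Equiv.Perm.ofSubtype (Equiv.Perm.subtypePerm f.toEquiv hS)
  have hσS : ∀ u ∈ S, σ u = f u := fun u hu => Equiv.Perm.ofSubtype_apply_of_mem _ hu
  have hσSc : ∀ u ∉ S, σ u = u := fun u hu => Equiv.Perm.ofSubtype_apply_of_not_mem _ hu
  have hcross : ∀ a ∈ S, ∀ b ∉ S, (G.Adj (f a) b ↔ G.Adj a b) := fun a ha b hb =>
    ⟨fun h => by
      have hfa := hfix _ ((hS a).mpr ha) b hb h
      rwa [f.injective hfa] at h,
     fun h => by rwa [hfix a ha b hb h]⟩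
  refine ⟨⟨σ, fun {a b} => ?_⟩, hσS, hσSc⟩
  by_cases ha : a ∈ S <;> by_cases hb : b ∈ S
  · rw [hσS a ha, hσS b hb]; exact f.map_adj_iff
  · rw [hσS a ha, hσSc b hb]; exact hcross a ha b hb
  · rw [hσSc a ha, hσS b hb, G.adj_comm, G.adj_comm a]; exact hcross b hb a ha
  · rw [hσSc a ha, hσSc b hb]

end SimpleGraph

section Automorphisms

variable {T : SimpleGraph V}

theorem mem_semiTree_iff (hT : T.IsTree) {v w u : V} (hvw : T.Adj v w) :
    u ∈ semiTree T v w ↔ T.dist v u = T.dist w u + 1 := by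
  have := hT.dist_eq_dist_add_one_of_adj u hvw
  rw [semiTree, Set.mem_ofPred_eq, SimpleGraph.dist_comm (u := v),
    SimpleGraph.dist_comm (u := w)]
  omega

theorem notMem_semiTree_of_mem_semiTree {v w u : V} (h : u ∈ semiTree T v w) :
    u ∉ semiTree T w v := fun h' => lt_asymm (show T.dist w u < T.dist v u from h) h'

theorem mem_semiTree_or_mem_semiTree (hT : T.IsTree) {v w : V} (hvw : T.Adj v w) (u : V) :
    u ∈ semiTree T v w ∨ u ∈ semiTree T w v := by
  have := hT.dist_ne_of_adj u hvw
  simp only [semiTree, Set.mem_ofPred_eq, SimpleGraph.dist_comm (v := u)]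
  omega

theorem notMem_semiTree_iff (hT : T.IsTree) {v w u : V} (hvw : T.Adj v w) :
    u ∉ semiTree T v w ↔ u ∈ semiTree T w v :=
  ⟨(mem_semiTree_or_mem_semiTree hT hvw u).resolve_left, notMem_semiTree_of_mem_semiTree⟩

theorem mem_semiTree_apply_iff (f : T ≃g T) {v w u : V} (hfv : f v = v) (hfw : f w = w) :
    f u ∈ semiTree T v w ↔ u ∈ semiTree T v w := by
  simp only [semiTree, Set.mem_ofPred_eq]
  conv_lhs => rw [← hfv, ← hfw, f.dist_map, f.dist_map]

theorem eq_and_eq_of_adj_of_mem_semiTree (hT : T.IsTree) {v w a b : V} (hvw : T.Adj v w)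
    (hab : T.Adj a b) (ha : a ∈ semiTree T w v) (hb : b ∈ semiTree T v w) : a = v ∧ b = w := by
  rw [mem_semiTree_iff hT hvw.symm] at ha
  rw [mem_semiTree_iff hT hvw] at hb
  have := hT.dist_eq_dist_add_one_of_adj v hab
  have := hT.dist_eq_dist_add_one_of_adj w hab
  have hdist : T.dist v a = T.dist w b := by omega
  obtain ⟨p, hp, hp_len⟩ := hT.connected.exists_path_of_dist v a
  obtain ⟨q, hq, hq_len⟩ := hT.connected.exists_path_of_dist w b
  -- Both `v → w ⇝ b` and `v ⇝ a → b` are geodesics, hence the same path.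
  have hgeo₁ : (Walk.cons hvw q).IsPath :=
    (Walk.cons hvw q).isPath_of_length_eq_dist (by simp; omega)
  have hgeo₂ : (p.concat hab).IsPath :=
    (p.concat hab).isPath_of_length_eq_dist (by simp; omega)
  have heq : Walk.cons hvw q = p.concat hab := congrArg Subtype.val
    ((hT.isAcyclic.subsingleton_path v b).elim ⟨_, hgeo₁⟩ ⟨_, hgeo₂⟩)
  have hw : w ∈ (p.concat hab).support := by simp [← heq]
  rw [Walk.support_concat, List.mem_append, List.mem_singleton] at hw
  rcases hw with hw | rfl
  · have := dist_add_dist_of_mem_support hp_len hw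
    have := dist_eq_one_iff_adj.mpr hvw
    omega
  · have : T.dist v a = 0 := by simp [hdist]
    exact ⟨((hT.connected.dist_eq_zero_iff).mp this).symm, rfl⟩

theorem dist_eq_dist_add_dist_of_mem_semiTree (hT : T.IsTree) {v w u x : V} (hvw : T.Adj v w)
    (hu : u ∈ semiTree T w v) (hx : x ∈ semiTree T v w) :
    T.dist u x = T.dist u w + T.dist w x := by
  obtain ⟨p, hp⟩ := hT.connected.exists_walk_length_eq_dist u x
  obtain ⟨d, hd, hd_fst, hd_snd⟩ :=
    p.exists_boundary_dart _ hu (notMem_semiTree_of_mem_semiTree hx)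
  obtain ⟨-, hw⟩ := eq_and_eq_of_adj_of_mem_semiTree hT hvw d.adj hd_fst
    ((notMem_semiTree_iff hT hvw.symm).mp hd_snd)
  exact (dist_add_dist_of_mem_support hp (hw ▸ p.dart_snd_mem_support_of_mem_darts hd)).symm

theorem mem_ball_inter_left {v w : V} {k : ℕ} (hvw : T.Adj v w) (hk : 1 ≤ k) :
    v ∈ _root_.ball T v k ∩ _root_.ball T w k := by
  simp [_root_.ball, dist_eq_one_iff_adj.mpr hvw.symm, hk]

theorem mem_ball_inter_of_mem_semiTree (hT : T.IsTree) {v w c u : V} {k : ℕ}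
    (hvw : T.Adj v w) (hc : c ∈ semiTree T w v) (hu : u ∈ semiTree T v w)
    (hcu : T.dist c u ≤ k) : u ∈ _root_.ball T v k ∩ _root_.ball T w k := by
  have := dist_eq_dist_add_dist_of_mem_semiTree hT hvw hc hu
  rw [mem_semiTree_iff hT hvw.symm, SimpleGraph.dist_comm (u := w),
    SimpleGraph.dist_comm (u := v)] at hc
  rw [mem_semiTree_iff hT hvw] at hu
  simp only [_root_.ball, Set.mem_inter_iff, Set.mem_ofPred_eq]
  omega

theorem mem_semiTree_iff_dist_eq_add (hT : T.IsTree) {a b v₀ u : V} (hab : T.Adj a b)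
    (hv₀ : v₀ ∈ semiTree T b a) :
    u ∈ semiTree T a b ↔ T.dist v₀ u = T.dist v₀ b + T.dist b u := by
  refine ⟨dist_eq_dist_add_dist_of_mem_semiTree hT hab hv₀, fun h => ?_⟩
  by_contra hu
  rw [notMem_semiTree_iff hT hab, mem_semiTree_iff hT hab.symm] at hu
  have := (mem_semiTree_iff hT hab.symm).mp hv₀
  have := hT.connected.dist_triangle (u := v₀) (v := a) (w := u)
  rw [SimpleGraph.dist_comm (u := v₀) (v := a), SimpleGraph.dist_comm (u := v₀) (v := b)] at *
  omega

theorem eq_of_dist_eq_add_of_dist_eq_add (hT : T.IsTree) {v₀ u b b' : V}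
    (hb : T.dist v₀ u = T.dist v₀ b + T.dist b u) (hb' : T.dist v₀ u = T.dist v₀ b' + T.dist b' u)
    (hbb' : T.dist v₀ b = T.dist v₀ b') : b = b' := by
  suffices T.dist b' b = 0 from ((hT.connected.dist_eq_zero_iff).mp this).symm
  obtain h | h := Nat.eq_zero_or_pos (T.dist v₀ b)
  · have := (hT.connected.dist_eq_zero_iff).mp h
    have := (hT.connected.dist_eq_zero_iff).mp (hbb' ▸ h)
    subst_vars
    simp
  obtain ⟨n, hn⟩ := Nat.exists_eq_add_one_of_ne_zero h.ne'
  obtain ⟨a, hab, hv₀a⟩ := exists_adj_dist_eq hn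
  have hv₀ : v₀ ∈ semiTree T b a := by
    simp only [semiTree, Set.mem_ofPred_eq, SimpleGraph.dist_comm (v := v₀)]
    omega
  have hu := (mem_semiTree_iff_dist_eq_add hT hab hv₀).mpr hb
  rcases mem_semiTree_or_mem_semiTree hT hab b' with hb'_side | hb'_side
  · have := (mem_semiTree_iff_dist_eq_add hT hab hv₀).mp hb'_side
    rw [SimpleGraph.dist_comm]
    omega
  · have := dist_eq_dist_add_dist_of_mem_semiTree hT hab hb'_side hu
    omega

theorem exists_eqOn_semiTree (hT : T.IsTree) {v w : V} (hvw : T.Adj v w) (f : T ≃g T)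
    (hfv : f v = v) (hfw : f w = w) :
    ∃ g : T ≃g T, (∀ u ∈ semiTree T v w, g u = f u) ∧ Fixes g (semiTree T w v) := by
  obtain ⟨g, hgS, hgSc⟩ := f.exists_eqOn_and_eqOn_compl (semiTree T v w)
    (fun u => mem_semiTree_apply_iff f hfv hfw) fun a ha b hb hab => by
      obtain ⟨-, rfl⟩ := eq_and_eq_of_adj_of_mem_semiTree hT hvw hab.symm
        ((notMem_semiTree_iff hT hvw).mp hb) ha
      exact hfw
  exact ⟨g, hgS, fun u hu => hgSc u (notMem_semiTree_of_mem_semiTree hu)⟩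

theorem kClosure_antitone (S : Set (T ≃g T)) : Antitone (kClosure T S) :=
  fun _ _ hkr _ hx v => (hx v).imp fun _ ⟨hg, hgx⟩ =>
    ⟨hg, fun u hu => hgx u (le_trans (α := ℕ) hu (by exact_mod_cast hkr))⟩

theorem kClosure_mono {S S' : Set (T ≃g T)} (h : S ⊆ S') (k : ℕ) :
    kClosure T S k ⊆ kClosure T S' k :=
  fun _ hx v => (hx v).imp fun _ ⟨hg, hgx⟩ => ⟨h hg, hgx⟩

theorem mem_kClosure_of_eqOn_semiTree (hT : T.IsTree) {S : Set (T ≃g T)} (hS : 1 ∈ S)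
    {k : ℕ} {v w : V} (hvw : T.Adj v w) {f g : T ≃g T} (hf : f ∈ kClosure T S k)
    (hfix : Fixes f (_root_.ball T v k ∩ _root_.ball T w k))
    (hgf : ∀ u ∈ semiTree T v w, g u = f u) (hg : Fixes g (semiTree T w v)) :
    g ∈ kClosure T S k := by
  intro c
  rcases mem_semiTree_or_mem_semiTree hT hvw c with hc | hc
  · obtain ⟨g', hg'S, hg'f⟩ := hf c
    refine ⟨g', hg'S, fun u hu => ?_⟩
    rcases mem_semiTree_or_mem_semiTree hT hvw u with hu' | hu'
    · rw [hgf u hu', hg'f u hu]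
    · have hu_ball := mem_ball_inter_of_mem_semiTree hT hvw.symm hc hu' hu
      rw [hg u hu', hg'f u hu, hfix u (Set.inter_comm _ _ ▸ hu_ball)]
  · refine ⟨1, hS, fun u hu => ?_⟩
    rcases mem_semiTree_or_mem_semiTree hT hvw u with hu' | hu'
    · rw [hgf u hu', hfix u (mem_ball_inter_of_mem_semiTree hT hvw hc hu' hu)]; rfl
    · rw [hg u hu']; rfl

theorem propertyIPk_kClosure (hT : T.IsTree) {S : Set (T ≃g T)} (hS : 1 ∈ S) {k : ℕ}
    (hk : 1 ≤ k) : PropertyIPk T (kClosure T S k) k := by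
  intro v w hvw f hf hfix
  have hfv : f v = v := hfix v (mem_ball_inter_left hvw hk)
  have hfw : f w = w := hfix w (Set.inter_comm _ _ ▸ mem_ball_inter_left hvw.symm hk)
  obtain ⟨f₁, hf₁f, hf₁⟩ := exists_eqOn_semiTree hT hvw.symm f hfw hfv
  obtain ⟨f₂, hf₂f, hf₂⟩ := exists_eqOn_semiTree hT hvw f hfv hfw
  refine ⟨f₁, mem_kClosure_of_eqOn_semiTree hT hS hvw.symm hf (Set.inter_comm _ _ ▸ hfix)
    hf₁f hf₁, f₂, mem_kClosure_of_eqOn_semiTree hT hS hvw hf hfix hf₂f hf₂, ?_, ?_, hf₁, hf₂, ?_⟩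
  · intro u hu
    rcases mem_semiTree_or_mem_semiTree hT hvw u with hu' | hu'
    · exact hf₁ u hu'
    · rw [hf₁f u hu', hfix u hu]
  · intro u hu
    rcases mem_semiTree_or_mem_semiTree hT hvw u with hu' | hu'
    · rw [hf₂f u hu', hfix u hu]
    · exact hf₂ u hu'
  · ext u
    rw [RelIso.mul_apply]
    rcases mem_semiTree_or_mem_semiTree hT hvw u with hu' | hu'
    · rw [hf₂f u hu', hf₁ _ ((mem_semiTree_apply_iff f hfv hfw).mpr hu')]
    · rw [hf₂ u hu', hf₁f u hu']

open Topology Filter in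
theorem mem_closure_iff_forall_finite {S : Set (T ≃g T)} {x : T ≃g T} :
    x ∈ closure S ↔ ∀ I : Set V, I.Finite → ∃ g ∈ S, ∀ v ∈ I, g v = x v := by
  let _ : TopologicalSpace V := ⊥
  have : DiscreteTopology V := ⟨rfl⟩
  have hbasis : (𝓝 x).HasBasis Set.Finite (fun I => {g : T ≃g T | ∀ v ∈ I, g v = x v}) := by
    rw [autTopology, nhds_induced, nhds_pi]
    simp only [nhds_discrete]
    exact (hasBasis_pi_pure _).comap _
  exact mem_closure_iff_nhds_basis hbasis

theorem mem_closure_of_forall_ball {S : Set (T ≃g T)} {x : T ≃g T} (v₀ : V)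
    (h : ∀ r, ∃ g ∈ S, ∀ u ∈ _root_.ball T v₀ r, g u = x u) : x ∈ closure S := by
  refine mem_closure_iff_forall_finite.mpr fun I hI => ?_
  obtain ⟨r, hr⟩ := (hI.image (T.dist v₀)).bddAbove
  obtain ⟨g, hg, hgx⟩ := h r
  exact ⟨g, hg, fun u hu => hgx u (hr ⟨u, hu, rfl⟩)⟩

theorem finite_ball (hT : T.Connected) (hlf : ∀ v : V, (T.neighborSet v).Finite) (v : V)
    (k : ℕ) : (_root_.ball T v k).Finite := by
  induction k generalizing v with
  | zero => simp [_root_.ball, hT.dist_eq_zero_iff]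
  | succ k ih =>
    refine ((hlf v).biUnion fun w _ => ih w).insert v |>.subset fun u hu => ?_
    obtain huv | huv := eq_or_ne u v
    · exact .inl huv
    obtain ⟨p, hp⟩ := hT.exists_walk_length_eq_dist v u
    cases p with
    | nil => exact absurd rfl huv
    | @cons _ w _ hvw q =>
      refine .inr (Set.mem_biUnion (x := w) hvw ?_)
      have := dist_le q
      simp only [_root_.ball, Set.mem_ofPred_eq, Walk.length_cons] at hu hp ⊢
      omega

theorem closure_subset_kClosure (hT : T.Connected) (hlf : ∀ v : V, (T.neighborSet v).Finite)
    (S : Set (T ≃g T)) (k : ℕ) : closure S ⊆ kClosure T S k := fun _ hx v =>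
  mem_closure_iff_forall_finite.mp hx _ (finite_ball hT hlf v k)

theorem closure_eq_kClosure_of_forall_lt (hT : T.Connected)
    (hlf : ∀ v : V, (T.neighborSet v).Finite) {S : Set (T ≃g T)} {k : ℕ}
    (hstab : ∀ r, k < r → kClosure T S r = kClosure T S k) : closure S = kClosure T S k := by
  refine (closure_subset_kClosure hT hlf S k).antisymm fun x hx => ?_
  refine mem_closure_of_forall_ball hT.nonempty.some fun r => ?_
  rcases le_or_gt r k with hrk | hkr
  · exact kClosure_antitone S hrk hx _
  · exact (hstab r hkr).superset hx _

theorem mul_mem_closure {G : Subgroup (T ≃g T)} {a b : T ≃g T} (ha : a ∈ closure (G : Set _))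
    (hb : b ∈ closure (G : Set _)) : a * b ∈ closure (G : Set (T ≃g T)) := by
  refine mem_closure_iff_forall_finite.mpr fun I hI => ?_
  obtain ⟨gb, hgb, hgbb⟩ := mem_closure_iff_forall_finite.mp hb I hI
  obtain ⟨ga, hga, hgaa⟩ := mem_closure_iff_forall_finite.mp ha _ (hI.image b)
  refine ⟨ga * gb, G.mul_mem hga hgb, fun v hv => ?_⟩
  simp only [RelIso.mul_apply, hgbb v hv, hgaa (b v) ⟨v, hv, rfl⟩]

theorem inv_mem_closure {G : Subgroup (T ≃g T)} {a : T ≃g T} (ha : a ∈ closure (G : Set _)) :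
    a⁻¹ ∈ closure (G : Set (T ≃g T)) := by
  refine mem_closure_iff_forall_finite.mpr fun I hI => ?_
  obtain ⟨g, hg, hga⟩ := mem_closure_iff_forall_finite.mp ha _ (hI.image fun v => a⁻¹ v)
  refine ⟨g⁻¹, G.inv_mem hg, fun v hv => ?_⟩
  have hgv : g (a⁻¹ v) = v := by simpa using hga _ ⟨v, hv, rfl⟩
  simpa using (congrArg (fun u => g⁻¹ u) hgv).symm

def closureSubgroup (G : Subgroup (T ≃g T)) : Subgroup (T ≃g T) where
  carrier := closure G
  mul_mem' := mul_mem_closure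
  one_mem' := subset_closure G.one_mem
  inv_mem' := inv_mem_closure

theorem mem_semiTree_of_propertyIPk_zero (hT : T.IsTree) {S : Set (T ≃g T)}
    (hIP : PropertyIPk T S 0) {f : T ≃g T} (hf : f ∈ S) {v w u : V} (hvw : T.Adj v w)
    (hu : u ∈ semiTree T v w) : f u ∈ semiTree T v w := by
  have hfix : Fixes f (_root_.ball T v 0 ∩ _root_.ball T w 0) := by
    rintro z ⟨hvz, hwz⟩
    simp only [_root_.ball, Set.mem_ofPred_eq, Nat.le_zero, hT.connected.dist_eq_zero_iff]
      at hvz hwz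
    exact absurd (hvz.trans hwz.symm) hvw.ne
  obtain ⟨f₁, -, f₂, -, -, -, hf₁, hf₂, rfl⟩ := hIP v w hvw f hf hfix
  have hf₂u : f₂ u ∈ semiTree T v w := by
    by_contra h
    have hf₂u := f₂.injective (hf₂ _ ((notMem_semiTree_iff hT hvw).mp h))
    rw [hf₂u] at h
    exact h hu
  rw [RelIso.mul_apply, hf₁ _ hf₂u]
  exact hf₂u

theorem eq_one_of_forall_mem_semiTree (hT : T.Connected) {f : T ≃g T}
    (hf : ∀ v w, T.Adj v w → ∀ u ∈ semiTree T v w, f u ∈ semiTree T v w) : f = 1 := by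
  ext u
  by_contra hne
  -- The first edge `(u, z)` of a geodesic from `u` to `f u` separates `u` from `f u`.
  obtain ⟨n, hn⟩ := Nat.exists_eq_add_one_of_ne_zero
    (hT.pos_dist_of_ne (u := f u) (v := u) hne).ne'
  obtain ⟨z, hzu, hz⟩ := exists_adj_dist_eq hn
  have hu : u ∈ semiTree T z u := by
    simp [semiTree, dist_eq_one_iff_adj.mpr hzu]
  have := hf z u hzu u hu
  simp only [semiTree, Set.mem_ofPred_eq, SimpleGraph.dist_comm (u := z)] at this
  rw [SimpleGraph.dist_comm] at hn
  omega

theorem kClosure_zero_subset_of_propertyIPk_zero (hT : T.IsTree) {S : Set (T ≃g T)}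
    (hIP : PropertyIPk T S 0) (hS : 1 ∈ S) : kClosure T S 0 ⊆ S := by
  intro x hx
  suffices x = 1 from this ▸ hS
  ext v
  obtain ⟨g, hg, hgx⟩ := hx v
  rw [← hgx v (by simp [_root_.ball]), eq_one_of_forall_mem_semiTree hT.connected
    fun _ _ hvw _ => mem_semiTree_of_propertyIPk_zero hT hIP hg hvw]

theorem exists_eqOn_semiTree_of_propertyIPk {H : Subgroup (T ≃g T)} {k : ℕ}
    (hk : 1 ≤ k) (hIP : PropertyIPk T H k) {a b : V} (hab : T.Adj a b) {h g : T ≃g T}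
    (hh : h ∈ H) (hg : g ∈ H) (hhg : ∀ u ∈ _root_.ball T a k ∩ _root_.ball T b k, h u = g u) :
    ∃ h' ∈ H, (∀ u ∈ semiTree T b a, h' u = h u) ∧ ∀ u ∈ semiTree T a b, h' u = g u := by
  set t := h⁻¹ * g
  have htfix : Fixes t (_root_.ball T a k ∩ _root_.ball T b k) := fun u hu => by
    rw [RelIso.mul_apply, ← hhg u hu, RelIso.inv_apply_self]
  obtain ⟨t₁, -, t₂, ht₂, -, -, ht₁, ht₂fix, ht⟩ :=
    hIP a b hab t (H.mul_mem (H.inv_mem hh) hg) htfix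
  refine ⟨h * t₂, H.mul_mem hh ht₂, fun u hu => by rw [RelIso.mul_apply, ht₂fix u hu], ?_⟩
  intro u hu
  have htu : t u ∈ semiTree T a b := (mem_semiTree_apply_iff t
    (htfix a (mem_ball_inter_left hab hk))
    (htfix b (Set.inter_comm _ _ ▸ mem_ball_inter_left hab.symm hk))).mpr hu
  -- `t₁` fixes the semi-tree containing `t u`, so `t₂` already agrees with `t` there.
  have ht₂u : t₂ u = t u := t₁.injective (by rw [← RelIso.mul_apply, ← ht, ht₁ _ htu])
  rw [RelIso.mul_apply, ht₂u, RelIso.mul_apply, RelIso.apply_inv_self]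

section Splicing

variable {H : Subgroup (T ≃g T)} {k : ℕ} {x : T ≃g T} {v₀ : V}

/-- The branch of `T` behind `b`, seen from `v₀`, is encoded as
`{u | T.dist v₀ u = T.dist v₀ b + T.dist b u}`. -/
theorem exists_eqOn_branches (hT : T.IsTree) (hk : 1 ≤ k) (hIP : PropertyIPk T H k)
    (hx : x ∈ kClosure T H k) {m : ℕ} {h : T ≃g T} (hh : h ∈ H)
    (hhx : ∀ u ∈ _root_.ball T v₀ (k + m), h u = x u) (F : Finset V)
    (hF : ∀ b ∈ F, T.dist v₀ b = m + 1) :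
    ∃ h' ∈ H, (∀ u ∈ _root_.ball T v₀ (k + m), h' u = x u) ∧
      ∀ b ∈ F, ∀ u, T.dist v₀ u = T.dist v₀ b + T.dist b u → T.dist b u ≤ k → h' u = x u := by
  classical
  induction F using Finset.induction_on with
  | empty => exact ⟨h, hh, hhx, by simp⟩
  | @insert b F hbF ih =>
    obtain ⟨h₁, hh₁, hh₁x, hh₁F⟩ := ih fun b' hb' => hF b' (Finset.mem_insert_of_mem hb')
    have hb := hF b (Finset.mem_insert_self b F)
    obtain ⟨a, hab, hv₀a⟩ := exists_adj_dist_eq hb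
    have hv₀ : v₀ ∈ semiTree T b a := by
      simp only [semiTree, Set.mem_ofPred_eq, SimpleGraph.dist_comm (v := v₀)]
      omega
    have hbranch (u : V) := mem_semiTree_iff_dist_eq_add (u := u) hT hab hv₀
    obtain ⟨g, hg, hgx⟩ := hx b
    have hh₁g : ∀ u ∈ _root_.ball T a k ∩ _root_.ball T b k, h₁ u = g u := by
      rintro u ⟨hau, hbu⟩
      have := hT.connected.dist_triangle (u := v₀) (v := a) (w := u)
      rw [hh₁x u (by simp only [_root_.ball, Set.mem_ofPred_eq] at hau ⊢; omega), hgx u hbu]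
    obtain ⟨h', hh', hh'h₁, hh'g⟩ := exists_eqOn_semiTree_of_propertyIPk hk hIP hab hh₁ hg hh₁g
    refine ⟨h', hh', fun u hu => ?_, fun b' hb' u hb'u hb'uk => ?_⟩
    · rcases mem_semiTree_or_mem_semiTree hT hab u with hu' | hu'
      · rw [hh'g u hu', ← hgx u]
        have := (hbranch u).mp hu'
        simp only [_root_.ball, Set.mem_ofPred_eq] at hu ⊢
        omega
      · rw [hh'h₁ u hu', hh₁x u hu]
    · rcases Finset.mem_insert.mp hb' with rfl | hb'F
      · rw [hh'g u ((hbranch u).mpr hb'u), hgx u hb'uk]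
      · have hu : u ∈ semiTree T b a := by
          refine (notMem_semiTree_iff hT hab).mp fun hu => hbF ?_
          exact eq_of_dist_eq_add_of_dist_eq_add hT ((hbranch u).mp hu) hb'u
            (hb.trans (hF b' hb').symm) ▸ hb'F
        rw [hh'h₁ u hu, hh₁F b' hb'F u hb'u hb'uk]

theorem exists_eqOn_ball (hT : T.IsTree) (hlf : ∀ v : V, (T.neighborSet v).Finite)
    (hk : 1 ≤ k) (hIP : PropertyIPk T H k) (hx : x ∈ kClosure T H k) (m : ℕ) :
    ∃ h ∈ H, ∀ u ∈ _root_.ball T v₀ (k + m), h u = x u := by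
  induction m with
  | zero => exact hx v₀
  | succ m ih =>
    obtain ⟨h, hh, hhx⟩ := ih
    have hsphere : {b | T.dist v₀ b = m + 1}.Finite :=
      (finite_ball hT.connected hlf v₀ (m + 1)).subset fun b hb => hb.le
    obtain ⟨h', hh', hh'x, hh'branch⟩ := exists_eqOn_branches hT hk hIP hx hh hhx
      hsphere.toFinset fun b hb => hsphere.mem_toFinset.mp hb
    refine ⟨h', hh', fun u hu => ?_⟩
    rcases le_or_gt (T.dist v₀ u) (k + m) with hum | hum
    · exact hh'x u hum
    · obtain ⟨b, hb, hbu⟩ :=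
        hT.connected.exists_dist_eq_of_le (u := v₀) (x := u) (m := m + 1) (by omega)
      simp only [_root_.ball, Set.mem_ofPred_eq] at hu
      exact hh'branch b (hsphere.mem_toFinset.mpr hb) u hbu.symm (by omega)

theorem kClosure_subset_closure_of_propertyIPk (hT : T.IsTree)
    (hlf : ∀ v : V, (T.neighborSet v).Finite) (hIP : PropertyIPk T H k) :
    kClosure T H k ⊆ closure H := by
  rcases Nat.eq_zero_or_pos k with rfl | hk
  · exact (kClosure_zero_subset_of_propertyIPk_zero hT hIP H.one_mem).trans subset_closure
  · intro x hx
    refine mem_closure_of_forall_ball hT.connected.nonempty.some fun r => ?_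
    obtain ⟨h, hh, hhx⟩ := exists_eqOn_ball hT hlf hk hIP hx r
    exact ⟨h, hh, fun u hu => hhx u (le_trans (α := ℕ) hu (by omega))⟩

end Splicing

end Automorphisms

/-- the closure of `G` fails Property `IP_k` for every `k` iff the
descending chain of `k`-closures of `G` never stabilises. -/
theorem closure_fails_IPk_iff_kClosures_never_stabilise (T : SimpleGraph V)
    (hT : T.IsTree) (hlf : ∀ v : V, (T.neighborSet v).Finite)
    (G : Subgroup (T ≃g T)) :
    (∀ k : ℕ, ¬ PropertyIPk T (closure (G : Set (T ≃g T))) k) ↔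
      ∀ k : ℕ, ∃ r : ℕ, k < r ∧
        kClosure T (G : Set (T ≃g T)) r ≠ kClosure T (G : Set (T ≃g T)) k := by
  constructor
  · intro hfail k
    by_contra! hstab
    have hclosure := closure_eq_kClosure_of_forall_lt hT.connected hlf hstab
    apply hfail (k + 1)
    rw [hclosure, ← hstab (k + 1) (Nat.lt_succ_self k)]
    exact propertyIPk_kClosure hT G.one_mem (Nat.le_add_left 1 k)
  · intro hchain k hIP
    obtain ⟨r, hkr, hne⟩ := hchain k
    refine hne ((kClosure_antitone _ hkr.le).antisymm ?_)
    calc kClosure T G k ⊆ kClosure T (closureSubgroup G) k := kClosure_mono subset_closure k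
      _ ⊆ closure (closure (G : Set (T ≃g T))) :=
        kClosure_subset_closure_of_propertyIPk hT hlf hIP
      _ = closure G := closure_closure
      _ ⊆ kClosure T G r := closure_subset_kClosure hT.connected hlf _ r
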